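/- arXiv:1701.01264 — 2 statements merged into one kernel-verified Lean document; each statement's English description precedes it below -/
import Mathlib

section
/- For a nonempty compact convex set X ⊂ ℝ², its maximal Feret diameter diam(X) = sup_θ H_X(θ) and perimeter U(X) satisfy 2·diam(X) ≤ U(X) ≤ 4·diam(X). -/
open Real Pointwise MeasureTheory

/-- Points of the Euclidean plane. -/
abbrev Pt := EuclideanSpace ℝ (Fin 2)

noncomputable def mk2 (a b : ℝ) : Pt := (WithLp.equiv 2 (Fin 2 → ℝ)).symm ![a, b]

/-- Support function `f_X(x) = sup_{s ∈ X} ⟨x, s⟩`. -/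
noncomputable def fS (X : Set Pt) (x : Pt) : ℝ :=
  sSup ((fun s => (inner ℝ x s : ℝ)) '' X)

/-- Direction vector `(-sin θ, cos θ)`. -/
noncomputable def dir (θ : ℝ) : Pt := mk2 (-Real.sin θ) (Real.cos θ)

/-- Support function in direction θ. -/
noncomputable def hF (X : Set Pt) (θ : ℝ) : ℝ := fS X (dir θ)

/-- The Feret diameter `H_X(θ) = h_X(θ) + h_{-X}(θ)`. -/
noncomputable def feret (X : Set Pt) (θ : ℝ) : ℝ := hF X θ + hF (-X) θ

/-- The segment with endpoints `±½(cos θ, sin θ)`. -/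
noncomputable def seg (θ : ℝ) : Set Pt :=
  segment ℝ (-mk2 (Real.cos θ / 2) (Real.sin θ / 2)) (mk2 (Real.cos θ / 2) (Real.sin θ / 2))

/-!
Let `D` be the diameter of `X`. For all `p, q ∈ X` and every direction,
`|⟨dir θ, p - q⟩| ≤ H_X(θ) ≤ D`. Writing `⟨dir θ, p - q⟩ = ‖p - q‖ cos (θ - φ)` and integrating
over `[0, π]` gives `2 ‖p - q‖ ≤ U(X)`, hence `2 D ≤ U(X)` while `sup H_X ≤ D`.
The upper bound is `U(X) ≤ π sup H_X`.
-/

section Direction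

lemma norm_dir (θ : ℝ) : ‖dir θ‖ = 1 := by
  simp [EuclideanSpace.norm_eq, dir, mk2, Fin.sum_univ_two]

lemma continuous_dir : Continuous dir :=
  (PiLp.continuous_toLp 2 _).comp <| continuous_pi fun i => by
    fin_cases i <;>
      simp only [Fin.zero_eta, Fin.mk_one, Matrix.cons_val_zero, Matrix.cons_val_one] <;> fun_prop

lemma inner_dir (θ : ℝ) (v : Pt) :
    (inner ℝ (dir θ) v : ℝ) = -Real.sin θ * v 0 + Real.cos θ * v 1 := by
  simp [dir, mk2, EuclideanSpace.inner_eq_star_dotProduct, dotProduct, Fin.sum_univ_two, mul_comm]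

lemma exists_inner_dir_eq_norm_mul_cos (v : Pt) :
    ∃ φ, ∀ θ, (inner ℝ (dir θ) v : ℝ) = ‖v‖ * Real.cos (θ - φ) := by
  rcases eq_or_ne v 0 with rfl | hv
  · exact ⟨0, by simp⟩
  -- `φ` is the argument of `v 1 - i v 0`, which has the same modulus as `v`.
  set z : ℂ := ⟨v 1, -v 0⟩
  have hz : ‖z‖ = ‖v‖ := by
    rw [Complex.norm_def, Complex.normSq_mk, EuclideanSpace.norm_eq, Fin.sum_univ_two]
    simp only [Real.norm_eq_abs, sq_abs]
    ring_nf
  have hz0 : z ≠ 0 := norm_ne_zero_iff.mp (hz ▸ norm_ne_zero_iff.mpr hv)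
  refine ⟨Complex.arg z, fun θ => ?_⟩
  have hv' : ‖v‖ ≠ 0 := norm_ne_zero_iff.mpr hv
  rw [inner_dir, Real.cos_sub, Complex.cos_arg hz0, Complex.sin_arg, hz]
  field_simp
  ring

lemma integral_abs_cos_sub (φ : ℝ) : ∫ θ in (0 : ℝ)..π, |Real.cos (θ - φ)| = 2 := by
  have hper : Function.Periodic (fun u => |Real.cos u|) π := fun u => by simp [Real.cos_add_pi]
  rw [intervalIntegral.integral_comp_sub_right (fun u => |Real.cos u|), zero_sub,
    show π - φ = -φ + π by ring, hper.intervalIntegral_add_eq (-φ) (-(π / 2)),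
    show -(π / 2) + π = π / 2 by ring]
  have hcos : Set.EqOn (fun u => |Real.cos u|) Real.cos (Set.uIcc (-(π / 2)) (π / 2)) :=
    fun u hu => by
      rw [Set.uIcc_of_le (by linarith [pi_pos])] at hu
      exact abs_of_nonneg (Real.cos_nonneg_of_mem_Icc hu)
  rw [intervalIntegral.integral_congr hcos, integral_cos, Real.sin_neg, Real.sin_pi_div_two]
  norm_num

lemma integral_abs_inner_dir (v : Pt) :
    ∫ θ in (0 : ℝ)..π, |(inner ℝ (dir θ) v : ℝ)| = 2 * ‖v‖ := by
  obtain ⟨φ, hφ⟩ := exists_inner_dir_eq_norm_mul_cos v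
  simp_rw [hφ, abs_mul, abs_norm]
  rw [intervalIntegral.integral_const_mul, integral_abs_cos_sub, mul_comm]

end Direction

section SupportFunction

variable {X : Set Pt}

lemma fS_le (hne : X.Nonempty) {x : Pt} {c : ℝ} (h : ∀ s ∈ X, (inner ℝ x s : ℝ) ≤ c) :
    fS X x ≤ c :=
  csSup_le (hne.image _) (Set.forall_mem_image.mpr h)

lemma inner_le_fS (hX : Bornology.IsBounded X) (x : Pt) {s : Pt} (hs : s ∈ X) :
    (inner ℝ x s : ℝ) ≤ fS X x := by
  obtain ⟨R, hR⟩ := hX.exists_norm_le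
  refine le_csSup ⟨‖x‖ * R, Set.forall_mem_image.mpr fun t ht => ?_⟩ ⟨s, hs, rfl⟩
  exact (real_inner_le_norm x t).trans (by gcongr; exact hR t ht)

lemma continuous_fS (hne : X.Nonempty) (hX : Bornology.IsBounded X) : Continuous (fS X) := by
  obtain ⟨R, hR⟩ := hX.exists_norm_le
  refine (LipschitzWith.of_le_add_mul' R fun x y => ?_).continuous
  rw [add_comm]
  refine fS_le hne fun s hs => ?_
  rw [← sub_add_cancel x y, inner_add_left, sub_add_cancel, dist_eq_norm]
  gcongr
  · exact (real_inner_le_norm _ _).trans (by rw [mul_comm]; gcongr; exact hR s hs)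
  · exact inner_le_fS hX y hs

end SupportFunction

section Feret

variable {X : Set Pt}

lemma continuous_feret (hne : X.Nonempty) (hX : Bornology.IsBounded X) :
    Continuous (feret X) :=
  ((continuous_fS hne hX).comp continuous_dir).add
    ((continuous_fS hne.neg hX.neg).comp continuous_dir)

lemma abs_inner_dir_sub_le_feret (hX : Bornology.IsBounded X) (θ : ℝ) {p q : Pt}
    (hp : p ∈ X) (hq : q ∈ X) : |(inner ℝ (dir θ) (p - q) : ℝ)| ≤ feret X θ := by
  have key : ∀ {p q}, p ∈ X → q ∈ X → (inner ℝ (dir θ) (p - q) : ℝ) ≤ feret X θ := by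
    intro p q hp hq
    rw [sub_eq_add_neg, inner_add_right]
    exact add_le_add (inner_le_fS hX _ hp) (inner_le_fS hX.neg _ (Set.neg_mem_neg.mpr hq))
  rw [abs_le, neg_le, ← inner_neg_right, neg_sub]
  exact ⟨key hq hp, key hp hq⟩

lemma feret_nonneg (hne : X.Nonempty) (hX : Bornology.IsBounded X) (θ : ℝ) : 0 ≤ feret X θ := by
  obtain ⟨p, hp⟩ := hne
  exact (abs_nonneg _).trans (abs_inner_dir_sub_le_feret hX θ hp hp)

lemma feret_le_diam (hne : X.Nonempty) (hX : Bornology.IsBounded X) (θ : ℝ) :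
    feret X θ ≤ Metric.diam X := by
  rw [feret, hF, hF, ← le_sub_iff_add_le]
  refine fS_le hne fun s hs => ?_
  rw [le_sub_comm]
  refine fS_le hne.neg fun u hu => ?_
  rw [le_sub_iff_add_le, add_comm, ← inner_add_right, ← sub_neg_eq_add]
  calc (inner ℝ (dir θ) (s - -u) : ℝ) ≤ ‖dir θ‖ * ‖s - -u‖ := real_inner_le_norm _ _
    _ = dist s (-u) := by rw [norm_dir, one_mul, dist_eq_norm]
    _ ≤ Metric.diam X := Metric.dist_le_diam_of_mem hX hs (Set.mem_neg.mp hu)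

lemma iSup_feret_le_diam (hne : X.Nonempty) (hX : Bornology.IsBounded X) :
    ⨆ θ, feret X θ ≤ Metric.diam X :=
  ciSup_le (feret_le_diam hne hX)

lemma two_mul_diam_le_integral_feret (hne : X.Nonempty) (hX : Bornology.IsBounded X) :
    2 * Metric.diam X ≤ ∫ θ in (0 : ℝ)..π, feret X θ := by
  have hint : IntervalIntegrable (feret X) volume 0 π :=
    (continuous_feret hne hX).intervalIntegrable 0 π
  rw [← le_div_iff₀' two_pos]
  refine Metric.diam_le_of_forall_dist_le ?_ fun p hp q hq => ?_
  · exact div_nonneg (intervalIntegral.integral_nonneg pi_pos.le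
      fun θ _ => feret_nonneg hne hX θ) zero_le_two
  rw [le_div_iff₀' two_pos, dist_eq_norm, ← integral_abs_inner_dir]
  refine intervalIntegral.integral_mono_on pi_pos.le ?_ hint
    fun θ _ => abs_inner_dir_sub_le_feret hX θ hp hq
  exact (continuous_dir.inner continuous_const).abs.intervalIntegrable _ _

lemma integral_feret_le_four_mul_iSup (hne : X.Nonempty) (hX : Bornology.IsBounded X) :
    ∫ θ in (0 : ℝ)..π, feret X θ ≤ 4 * ⨆ θ, feret X θ := by
  have hbdd : BddAbove (Set.range (feret X)) :=
    ⟨Metric.diam X, Set.forall_mem_range.mpr (feret_le_diam hne hX)⟩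
  have hsup : 0 ≤ ⨆ θ, feret X θ := (feret_nonneg hne hX 0).trans (le_ciSup hbdd 0)
  calc ∫ θ in (0 : ℝ)..π, feret X θ ≤ ∫ _ in (0 : ℝ)..π, ⨆ θ, feret X θ :=
        intervalIntegral.integral_mono_on pi_pos.le
          ((continuous_feret hne hX).intervalIntegrable 0 π) intervalIntegrable_const
          fun θ _ => le_ciSup hbdd θ
    _ = π * ⨆ θ, feret X θ := by simp
    _ ≤ 4 * ⨆ θ, feret X θ := by gcongr; exact pi_le_four

end Feret

theorem perimeter_diam_equiv_general (X : Set Pt)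
    (hne : X.Nonempty) (hcomp : IsCompact X) :
    2 * (⨆ θ : ℝ, feret X θ) ≤ (∫ θ in (0:ℝ)..π, feret X θ) ∧
    (∫ θ in (0:ℝ)..π, feret X θ) ≤ 4 * (⨆ θ : ℝ, feret X θ) := by
  have hX := hcomp.isBounded
  exact ⟨(mul_le_mul_of_nonneg_left (iSup_feret_le_diam hne hX) zero_le_two).trans
      (two_mul_diam_le_integral_feret hne hX),
    integral_feret_le_four_mul_iSup hne hX⟩

theorem perimeter_diam_equiv (X : Set Pt)
    (hne : X.Nonempty) (hcomp : IsCompact X) (hconv : Convex ℝ X) :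
    2 * (⨆ θ : ℝ, feret X θ) ≤ (∫ θ in (0:ℝ)..π, feret X θ) ∧
    (∫ θ in (0:ℝ)..π, feret X θ) ≤ 4 * (⨆ θ : ℝ, feret X θ) :=
  perimeter_diam_equiv_general X hne hcomp
end

section
/- Let N > 1, let X ⊂ ℝ² be a nonempty compact convex centrally symmetric set (X = −X), and let θ_i = (i−1)π/N. Define X_0^{(N)} = ∩_{i=1}^N {x ∈ ℝ² : |⟨x, (−sin θ_i, cos θ_i)⟩| ≤ ½ H_X(θ_i)}. Then X ⊆ X_0^{(N)} and H_{X_0^{(N)}}(θ_i) = H_X(θ_i) for each i = 1, …, N. -/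
open Real Pointwise MeasureTheory

/-- The `C₀⁽ᴺ⁾`-approximation of `X`, as an intersection of slabs. -/
noncomputable def approx0 (N : ℕ) (X : Set Pt) : Set Pt :=
  ⋂ i : Fin N, {x : Pt | |(inner ℝ x (dir ((i : ℝ) * π / N)) : ℝ)| ≤
    feret X ((i : ℝ) * π / N) / 2}

/-! The slabs defining `approx0 N X` are exactly the support slabs of `X` in the directions
`θ_i`: symmetry of `X` makes each slab `{|⟨x, u⟩| ≤ h_X(u)}` contain `X`, and since the slab
touches `X` on both sides the support function of the intersection in each `θ_i` is still
`h_X(θ_i)`. -/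

theorem bddAbove_inner_image {X : Set Pt} (hX : Bornology.IsBounded X) (x : Pt) :
    BddAbove ((fun s => (inner ℝ x s : ℝ)) '' X) :=
  ((innerSL ℝ x).lipschitz.isBounded_image hX).bddAbove

theorem abs_inner_le_fS {X : Set Pt} (hX : Bornology.IsBounded X) (hsym : -X = X) (x : Pt)
    {s : Pt} (hs : s ∈ X) : |(inner ℝ x s : ℝ)| ≤ fS X x := by
  have hns : -s ∈ X := by rw [← hsym]; simpa using hs
  have h₁ : (inner ℝ x s : ℝ) ≤ fS X x := le_csSup (bddAbove_inner_image hX x) ⟨s, hs, rfl⟩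
  have h₂ : (inner ℝ x (-s) : ℝ) ≤ fS X x := le_csSup (bddAbove_inner_image hX x) ⟨-s, hns, rfl⟩
  rw [inner_neg_right] at h₂
  exact abs_le.mpr ⟨by linarith, h₁⟩

theorem fS_eq_of_subset_of_inner_le {X A : Set Pt} (hne : X.Nonempty) (hXA : X ⊆ A) {x : Pt}
    (hA : ∀ a ∈ A, (inner ℝ x a : ℝ) ≤ fS X x) : fS A x = fS X x := by
  have hAbdd : BddAbove ((fun s => (inner ℝ x s : ℝ)) '' A) := by
    refine ⟨fS X x, ?_⟩
    rintro _ ⟨a, ha, rfl⟩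
    exact hA a ha
  refine le_antisymm ?_ (csSup_le_csSup hAbdd (hne.image _) (Set.image_mono hXA))
  refine csSup_le ((hne.mono hXA).image _) ?_
  rintro _ ⟨a, ha, rfl⟩
  exact hA a ha

theorem feret_eq_two_mul_hF {X : Set Pt} (hsym : -X = X) (θ : ℝ) :
    feret X θ = 2 * hF X θ := by
  rw [feret, hsym]
  ring

theorem mem_approx0 {N : ℕ} {X : Set Pt} {x : Pt} :
    x ∈ approx0 N X ↔ ∀ i : Fin N,
      |(inner ℝ x (dir ((i : ℝ) * π / N)) : ℝ)| ≤ feret X ((i : ℝ) * π / N) / 2 := by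
  simp only [approx0, Set.mem_iInter, Set.mem_ofPred_eq]

theorem neg_approx0 (N : ℕ) (X : Set Pt) : -approx0 N X = approx0 N X := by
  ext x
  simp only [Set.mem_neg, mem_approx0, inner_neg_left, abs_neg]

theorem subset_approx0 (N : ℕ) {X : Set Pt} (hX : Bornology.IsBounded X) (hsym : -X = X) :
    X ⊆ approx0 N X := by
  intro s hs
  refine mem_approx0.mpr fun i => ?_
  rw [feret_eq_two_mul_hF hsym, mul_div_cancel_left₀ _ two_ne_zero, real_inner_comm]
  exact abs_inner_le_fS hX hsym _ hs

theorem inner_le_hF_of_mem_approx0 {N : ℕ} {X : Set Pt} (hsym : -X = X) {a : Pt}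
    (ha : a ∈ approx0 N X) (i : Fin N) :
    (inner ℝ (dir ((i : ℝ) * π / N)) a : ℝ) ≤ hF X ((i : ℝ) * π / N) := by
  have h := mem_approx0.mp ha i
  rw [feret_eq_two_mul_hF hsym, mul_div_cancel_left₀ _ two_ne_zero, real_inner_comm] at h
  exact (abs_le.mp h).2

theorem approx0_superset_and_feret_eq_general (N : ℕ) (X : Set Pt)
    (hne : X.Nonempty) (hcomp : IsCompact X) (hsym : X = -X) :
    X ⊆ approx0 N X ∧
    ∀ i : Fin N, feret (approx0 N X) ((i : ℝ) * π / N) = feret X ((i : ℝ) * π / N) := by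
  have hsub := subset_approx0 N hcomp.isBounded hsym.symm
  refine ⟨hsub, fun i => ?_⟩
  rw [feret_eq_two_mul_hF (neg_approx0 N X), feret_eq_two_mul_hF hsym.symm, hF, hF,
    fS_eq_of_subset_of_inner_le hne hsub fun _ ha => inner_le_hF_of_mem_approx0 hsym.symm ha i]

theorem approx0_superset_and_feret_eq (N : ℕ) (hN : 1 < N) (X : Set Pt)
    (hne : X.Nonempty) (hcomp : IsCompact X) (hconv : Convex ℝ X) (hsym : X = -X) :
    X ⊆ approx0 N X ∧
    ∀ i : Fin N, feret (approx0 N X) ((i : ℝ) * π / N) = feret X ((i : ℝ) * π / N) :=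
  approx0_superset_and_feret_eq_general N X hne hcomp hsym
end
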